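/- arXiv:1708.06287 — 7 statements merged into one kernel-verified Lean document; each statement's English description precedes it below -/
import Mathlib

section
/- For all natural numbers a, b, c: the sum over w ≥ 0 of C(c+w, a+b)·C(a,w)·C(b,w) equals C(c,a)·C(c,b). -/
/-!
Expand `C(c + w, a + b) = ∑ᵢ C(w, i) C(c, a + b - i)` by Vandermonde and sum over `w` first.
Trinomial revision `C(b, w) C(w, i) = C(b, i) C(b - i, w - i)` and a shifted Vandermonde collapse
the inner sum `∑_w C(a, w) C(b, w) C(w, i)` to `C(b, i) C(a + b - i, b)`. Trinomial revision again,
`C(c, a + b - i) C(a + b - i, b) = C(c, b) C(c - b, a - i)`, and a last Vandermonde turn the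
remaining sum into `C(c, b) C(c, a)`.
-/

open Finset

namespace Nat

theorem add_choose_eq_sum_range (m n k : ℕ) :
    (m + n).choose k = ∑ i ∈ range (k + 1), m.choose i * n.choose (k - i) := by
  rw [add_choose_eq, Finset.Nat.sum_antidiagonal_eq_sum_range_succ_mk]

theorem sum_range_choose_mul_choose_add (m n i : ℕ) :
    ∑ u ∈ range (m + 1), m.choose u * n.choose (i + u) = (m + n).choose (m + i) := by
  have hvanish : ∀ p ≥ m + 1, m.choose p * n.choose (m + i - p) = 0 := fun p hp => by
    rw [choose_eq_zero_of_lt hp, zero_mul]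
  rw [add_choose_eq_sum_range, eventually_constant_sum hvanish (by omega),
    ← sum_range_reflect]
  refine sum_congr rfl fun u hu => ?_
  have hu : u ≤ m := mem_range_succ_iff.mp hu
  rw [add_tsub_cancel_right, choose_symm hu]
  congr 2
  omega

theorem sum_range_choose_mul_choose_mul_choose (a b i : ℕ) :
    ∑ w ∈ range (b + 1), a.choose w * b.choose w * w.choose i
      = b.choose i * (a + b - i).choose b := by
  rcases lt_or_ge b i with hbi | hib
  · rw [choose_eq_zero_of_lt hbi, zero_mul]
    refine sum_eq_zero fun w hw => ?_
    rw [choose_eq_zero_of_lt ((mem_range_succ_iff.mp hw).trans_lt hbi), mul_zero]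
  obtain ⟨m, rfl⟩ := exists_add_of_le hib
  have hlow : ∑ w ∈ range i, a.choose w * (i + m).choose w * w.choose i = 0 :=
    sum_eq_zero fun w hw => by rw [choose_eq_zero_of_lt (mem_range.mp hw), mul_zero]
  have hrevision (u : ℕ) :
      (i + m).choose (i + u) * (i + u).choose i = (i + m).choose i * m.choose u := by
    rw [choose_mul (le_add_right i u), add_tsub_cancel_left, add_tsub_cancel_left]
  calc ∑ w ∈ range (i + m + 1), a.choose w * (i + m).choose w * w.choose i
      = ∑ u ∈ range (m + 1), (i + m).choose i * (m.choose u * a.choose (i + u)) := by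
        rw [add_assoc, sum_range_add, hlow, zero_add]
        refine sum_congr rfl fun u _ => ?_
        rw [mul_assoc, hrevision]
        ring
    _ = (i + m).choose i * (a + (i + m) - i).choose (i + m) := by
        rw [← mul_sum, sum_range_choose_mul_choose_add]
        congr 2 <;> omega

theorem choose_mul_choose_eq_sum_range (a b c : ℕ) :
    c.choose a * c.choose b
      = ∑ i ∈ range (a + b + 1), c.choose (a + b - i) * (b.choose i * (a + b - i).choose b) := by
  have hvanish : ∀ i ≥ a + 1, c.choose (a + b - i) * (b.choose i * (a + b - i).choose b) = 0 := by
    intro i hi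
    rcases lt_or_ge b i with hbi | hib
    · rw [choose_eq_zero_of_lt hbi, zero_mul, mul_zero]
    · rw [choose_eq_zero_of_lt (by omega : a + b - i < b), mul_zero, mul_zero]
  have hc : c.choose b * c.choose a = c.choose b * (b + (c - b)).choose a := by
    rcases le_or_gt b c with hbc | hcb
    · rw [add_tsub_cancel_of_le hbc]
    · rw [choose_eq_zero_of_lt hcb, zero_mul, zero_mul]
  rw [eventually_constant_sum hvanish (by omega), mul_comm, hc, add_choose_eq_sum_range, mul_sum]
  refine sum_congr rfl fun i hi => ?_
  have hi : i ≤ a := mem_range_succ_iff.mp hi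
  rw [mul_left_comm (c.choose (a + b - i)), choose_mul (by omega : b ≤ a + b - i),
    mul_left_comm, show a + b - i - b = a - i by omega]

end Nat

/-- For all natural numbers `a b c`, the sum over `w ≥ 0` (finite, since terms
vanish for `w > min a b`) of `C(c+w, a+b)·C(a,w)·C(b,w)` equals `C(c,a)·C(c,b)`. -/
theorem stmt0 (a b c : ℕ) :
    ∑ w ∈ Finset.range (min a b + 1),
      (c + w).choose (a + b) * a.choose w * b.choose w
    = c.choose a * c.choose b := by
  have hvanish : ∀ w ≥ min a b + 1, (c + w).choose (a + b) * a.choose w * b.choose w = 0 := by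
    intro w hw
    rcases min_lt_iff.mp (Nat.lt_of_succ_le hw) with h | h
    · rw [Nat.choose_eq_zero_of_lt h, mul_zero, zero_mul]
    · rw [Nat.choose_eq_zero_of_lt h, mul_zero]
  calc _ = ∑ w ∈ range (b + 1), (c + w).choose (a + b) * a.choose w * b.choose w :=
        (eventually_constant_sum hvanish (by omega)).symm
    _ = ∑ i ∈ range (a + b + 1), c.choose (a + b - i) *
          ∑ w ∈ range (b + 1), a.choose w * b.choose w * w.choose i := by
        simp_rw [add_comm c, Nat.add_choose_eq_sum_range, sum_mul, mul_sum]
        rw [sum_comm]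
        exact sum_congr rfl fun i _ => sum_congr rfl fun w _ => by ring
    _ = c.choose a * c.choose b := by
        simp_rw [Nat.sum_range_choose_mul_choose_mul_choose]
        exact (Nat.choose_mul_choose_eq_sum_range a b c).symm
end

section
/- Let X be an m×n matrix of variables over a field k and let I_2(X) be the ideal of 2×2 minors of X in the polynomial ring k[X]. Every monomial in k[X] is congruent modulo I_2(X) to a staircase monomial. -/
open MvPolynomial Finsupp

private noncomputable def Wt {m n : ℕ} (p : Fin m × Fin n →₀ ℕ) : ℕ :=
  p.sum fun s e => e * ((s.1 : ℕ) * (s.2 : ℕ))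

private lemma Wt_add {m n : ℕ} (a b : Fin m × Fin n →₀ ℕ) : Wt (a + b) = Wt a + Wt b := by
  unfold Wt
  exact Finsupp.sum_add_index' (fun s => by simp) (fun s e1 e2 => add_mul _ _ _)

private lemma Wt_single {m n : ℕ} (s : Fin m × Fin n) (e : ℕ) :
    Wt (Finsupp.single s e) = e * ((s.1 : ℕ) * (s.2 : ℕ)) := by
  unfold Wt
  exact Finsupp.sum_single_index (by simp)

private lemma key (k : Type*) [Field k] (m n : ℕ) :
    ∀ N (p : Fin m × Fin n →₀ ℕ), Wt p = N →
    ∃ q : Fin m × Fin n →₀ ℕ,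
      (∀ (i i' : Fin m) (j j' : Fin n), i < i' → j < j' → q (i, j) * q (i', j') = 0) ∧
      MvPolynomial.monomial p (1 : k) - MvPolynomial.monomial q (1 : k) ∈
        Ideal.span {f : MvPolynomial (Fin m × Fin n) k |
          ∃ (i i' : Fin m) (j j' : Fin n), i < i' ∧ j < j' ∧
            f = MvPolynomial.X (i, j) * MvPolynomial.X (i', j') -
                MvPolynomial.X (i, j') * MvPolynomial.X (i', j)} := by
  intro N
  induction N using Nat.strong_induction_on with
  | _ N ih =>
    intro p hp
    by_cases hstair : ∀ (i i' : Fin m) (j j' : Fin n), i < i' → j < j' → p (i, j) * p (i', j') = 0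
    · exact ⟨p, hstair, by simp⟩
    · push_neg at hstair
      obtain ⟨i, i', j, j', hii, hjj, hne⟩ := hstair
      have h1 : 1 ≤ p (i, j) := Nat.one_le_iff_ne_zero.2 fun h => hne (by simp [h])
      have h2 : 1 ≤ p (i', j') := Nat.one_le_iff_ne_zero.2 fun h => hne (by simp [h])
      set s1 : Fin m × Fin n := (i, j)
      set s2 : Fin m × Fin n := (i, j')
      set s3 : Fin m × Fin n := (i', j)
      set s4 : Fin m × Fin n := (i', j')
      have hne14 : s1 ≠ s4 := by
        exact fun h => absurd (congrArg Prod.fst h) (Fin.ne_of_lt hii)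
      have hle : Finsupp.single s1 1 + Finsupp.single s4 1 ≤ p := by
        intro s
        rcases eq_or_ne s s1 with rfl | hA
        · simpa [Finsupp.single_apply, hne14, Ne.symm hne14] using h1
        · rcases eq_or_ne s s4 with rfl | hB
          · simpa [Finsupp.single_apply, hne14, Ne.symm hne14] using h2
          · simp [Finsupp.single_apply, Ne.symm hA, Ne.symm hB]
      set r : Fin m × Fin n →₀ ℕ := p - (Finsupp.single s1 1 + Finsupp.single s4 1) with hr
      have hpr : r + (Finsupp.single s1 1 + Finsupp.single s4 1) = p :=
        tsub_add_cancel_of_le hle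
      set p' : Fin m × Fin n →₀ ℕ := r + (Finsupp.single s2 1 + Finsupp.single s3 1) with hp'
      have hWlt : Wt p' < N := by
        have h1 : Wt p' = Wt r + ((i : ℕ) * (j' : ℕ) + (i' : ℕ) * (j : ℕ)) := by
          simp [hp', Wt_add, Wt_single, s2, s3, add_assoc]
        have h2 : N = Wt r + ((i : ℕ) * (j : ℕ) + (i' : ℕ) * (j' : ℕ)) := by
          rw [← hp, ← hpr]
          simp [Wt_add, Wt_single, s1, s4, add_assoc]
        have hij : (i : ℕ) < i' := hii
        have hjj' : (j : ℕ) < j' := hjj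
        have : (i : ℕ) * (j' : ℕ) + (i' : ℕ) * (j : ℕ) <
            (i : ℕ) * (j : ℕ) + (i' : ℕ) * (j' : ℕ) := by nlinarith
        omega
      obtain ⟨q, hq1, hq2⟩ := ih (Wt p') hWlt p' rfl
      refine ⟨q, hq1, ?_⟩
      have hdiff : (monomial p (1 : k)) - monomial p' 1 =
          monomial r 1 * (X s1 * X s4 - X s2 * X s3) := by
        have hmul : ∀ a b : Fin m × Fin n,
            monomial r (1 : k) * (X a * X b) =
              monomial (r + (Finsupp.single a 1 + Finsupp.single b 1)) 1 := by
          intro a b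
          rw [X, X, monomial_mul, monomial_mul]
          norm_num
        rw [mul_sub, hmul, hmul, hpr, ← hp']
      have hmem1 : (monomial p (1 : k)) - monomial p' 1 ∈
          Ideal.span {f : MvPolynomial (Fin m × Fin n) k |
            ∃ (i i' : Fin m) (j j' : Fin n), i < i' ∧ j < j' ∧
              f = MvPolynomial.X (i, j) * MvPolynomial.X (i', j') -
                  MvPolynomial.X (i, j') * MvPolynomial.X (i', j)} := by
        rw [hdiff]
        exact Ideal.mul_mem_left _ _ (Ideal.subset_span ⟨i, i', j, j', hii, hjj, rfl⟩)
      have := Ideal.add_mem _ hmem1 hq2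
      simpa using this

/-- Every monomial in `k[X]`, `X` an `m×n` matrix of variables, is congruent modulo the
ideal of `2×2` minors to a staircase monomial. -/
theorem stmt8 (k : Type*) [Field k] (m n : ℕ) (p : Fin m × Fin n →₀ ℕ) :
    ∃ q : Fin m × Fin n →₀ ℕ,
      (∀ (i i' : Fin m) (j j' : Fin n), i < i' → j < j' → q (i, j) * q (i', j') = 0) ∧
      MvPolynomial.monomial p (1 : k) - MvPolynomial.monomial q (1 : k) ∈
        Ideal.span {f : MvPolynomial (Fin m × Fin n) k |
          ∃ (i i' : Fin m) (j j' : Fin n), i < i' ∧ j < j' ∧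
            f = MvPolynomial.X (i, j) * MvPolynomial.X (i', j') -
                MvPolynomial.X (i, j') * MvPolynomial.X (i', j)} := by
  exact key k m n (Wt p) p rfl
end

section
/- Let X be an m×n matrix of variables over a field k. If p is a monomial and q is a staircase monomial in k[X] with p ≡ q modulo I_2(X), then p and q have the same total degree, the same row sums, and the same column sums of their exponent matrices. -/
open MvPolynomial Finset

noncomputable def rowcol (m n : ℕ) (p : Fin m × Fin n →₀ ℕ) : Fin m ⊕ Fin n →₀ ℕ :=
  Finsupp.equivFunOnFinite.symm
    (Sum.elim (fun i => ∑ j, p (i, j)) (fun j => ∑ i, p (i, j)))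

lemma aeval_monomial_segre (k : Type*) [Field k] (m n : ℕ) (p : Fin m × Fin n →₀ ℕ) :
    MvPolynomial.aeval (fun v : Fin m × Fin n =>
        (MvPolynomial.X (Sum.inl v.1) * MvPolynomial.X (Sum.inr v.2) :
          MvPolynomial (Fin m ⊕ Fin n) k))
      (MvPolynomial.monomial p (1 : k)) = MvPolynomial.monomial (rowcol m n p) (1 : k) := by
  have h1 : (MvPolynomial.monomial p (1 : k)) = ∏ v : Fin m × Fin n, MvPolynomial.X v ^ p v := by
    rw [monomial_eq, map_one, one_mul]
    exact Finsupp.prod_fintype _ _ (fun v => pow_zero _)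
  have h2 : (MvPolynomial.monomial (rowcol m n p) (1 : k)) =
      ∏ s : Fin m ⊕ Fin n, MvPolynomial.X s ^ (rowcol m n p) s := by
    rw [monomial_eq, map_one, one_mul]
    exact Finsupp.prod_fintype _ _ (fun v => pow_zero _)
  rw [h1, h2, map_prod]
  simp only [map_pow, aeval_X, mul_pow]
  rw [Finset.prod_mul_distrib, Fintype.prod_sum_type]
  congr 1
  · rw [Fintype.prod_prod_type]
    refine Finset.prod_congr rfl fun i _ => ?_
    show ∏ y : Fin n, X (Sum.inl i) ^ p (i, y) = _
    rw [Finset.prod_pow_eq_pow_sum]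
    simp [rowcol]
  · rw [Fintype.prod_prod_type]
    rw [Finset.prod_comm]
    refine Finset.prod_congr rfl fun j _ => ?_
    show ∏ x : Fin m, X (Sum.inr j) ^ p (x, j) = _
    rw [Finset.prod_pow_eq_pow_sum]
    simp [rowcol]

/-- If a monomial `p` is congruent modulo the ideal of `2×2` minors to a staircase
monomial `q`, then `p` and `q` have the same total degree and the same row and column
sums of their exponent matrices. -/
theorem stmt9 (k : Type*) [Field k] (m n : ℕ) (p q : Fin m × Fin n →₀ ℕ)
    (hq : ∀ (i i' : Fin m) (j j' : Fin n), i < i' → j < j' → q (i, j) * q (i', j') = 0)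
    (hpq : MvPolynomial.monomial p (1 : k) - MvPolynomial.monomial q (1 : k) ∈
        Ideal.span {f : MvPolynomial (Fin m × Fin n) k |
          ∃ (i i' : Fin m) (j j' : Fin n), i < i' ∧ j < j' ∧
            f = MvPolynomial.X (i, j) * MvPolynomial.X (i', j') -
                MvPolynomial.X (i, j') * MvPolynomial.X (i', j)}) :
    (∑ v : Fin m × Fin n, p v = ∑ v : Fin m × Fin n, q v) ∧
    (∀ i : Fin m, ∑ j : Fin n, p (i, j) = ∑ j : Fin n, q (i, j)) ∧
    (∀ j : Fin n, ∑ i : Fin m, p (i, j) = ∑ i : Fin m, q (i, j)) := by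
  set φ := MvPolynomial.aeval (R := k) (fun v : Fin m × Fin n =>
      (MvPolynomial.X (Sum.inl v.1) * MvPolynomial.X (Sum.inr v.2) :
        MvPolynomial (Fin m ⊕ Fin n) k)) with hφ
  have hker : Ideal.span {f : MvPolynomial (Fin m × Fin n) k |
          ∃ (i i' : Fin m) (j j' : Fin n), i < i' ∧ j < j' ∧
            f = MvPolynomial.X (i, j) * MvPolynomial.X (i', j') -
                MvPolynomial.X (i, j') * MvPolynomial.X (i', j)} ≤
      RingHom.ker φ.toRingHom := by
    rw [Ideal.span_le]
    rintro f ⟨i, i', j, j', _, _, rfl⟩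
    simp only [SetLike.mem_coe, RingHom.mem_ker, AlgHom.toRingHom_eq_coe, RingHom.coe_coe,
      map_sub, map_mul, hφ, aeval_X]
    ring
  have h0 : φ (MvPolynomial.monomial p (1 : k) - MvPolynomial.monomial q (1 : k)) = 0 :=
    hker hpq
  rw [map_sub, sub_eq_zero, aeval_monomial_segre, aeval_monomial_segre] at h0
  have heq : rowcol m n p = rowcol m n q :=
    MvPolynomial.monomial_left_injective (one_ne_zero) h0
  have hrow : ∀ i : Fin m, ∑ j : Fin n, p (i, j) = ∑ j : Fin n, q (i, j) := by
    intro i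
    have := congrArg (fun f => f (Sum.inl i)) heq
    simpa [rowcol] using this
  have hcol : ∀ j : Fin n, ∑ i : Fin m, p (i, j) = ∑ i : Fin m, q (i, j) := by
    intro j
    have := congrArg (fun f => f (Sum.inr j)) heq
    simpa [rowcol] using this
  refine ⟨?_, hrow, hcol⟩
  rw [Fintype.sum_prod_type, Fintype.sum_prod_type]
  exact Finset.sum_congr rfl fun i _ => hrow i
end

section
/- There is a bijection between the set of staircase monomials in the variables x_{i,j} (1 ≤ i ≤ m, 1 ≤ j ≤ n) and the set of (m+n)-tuples (x_1,...,x_m, y_1,...,y_n) of nonnegative integers with x_1 + ... + x_m = y_1 + ... + y_n, sending a staircase monomial to the tuple of row sums and column sums of its exponent matrix. -/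
/-!
For a staircase matrix `f`, let `S(i, j)` be its total mass in rows `< i` and columns `≥ j`.
The mass in rows `< i`, columns `< j` and the mass in rows `≥ i`, columns `≥ j` cannot both be
positive, so `S(i, j)` is the minimum of the corresponding partial row and column sums; the entries
are recovered from `S` by inclusion–exclusion, which gives injectivity.

Conversely, cut `range N`, `N = ∑ xᵢ = ∑ yⱼ`, into consecutive blocks of lengths `x₀, x₁, …`
from the bottom and of lengths `y₀, y₁, …` from the top, and let `f(i, j)` be the size of the
intersection of the `i`-th row block with the `j`-th column block. Rows advance upwards while
columns advance downwards, which makes `f` a staircase matrix.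
-/

open Finset

namespace Staircase

variable {m n : ℕ}

def IsStaircase (f : Fin m × Fin n → ℕ) : Prop :=
  ∀ i i' j j', i < i' → j < j' → f (i, j) * f (i', j') = 0

def cornerSum (f : Fin m × Fin n → ℕ) (i j : ℕ) : ℕ :=
  ∑ q with q.1.val < i ∧ j ≤ q.2.val, f q

theorem cornerSum_add_cornerSum (f : Fin m × Fin n → ℕ) (a : Fin m) (b : Fin n) :
    cornerSum f (a + 1) b + cornerSum f a (b + 1)
      = cornerSum f a b + cornerSum f (a + 1) (b + 1) + f (a, b) := by
  rw [← Fintype.sum_ite_eq' (a, b) f]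
  simp only [cornerSum, sum_filter, ← sum_add_distrib]
  refine sum_congr rfl fun q _ => ?_
  have : q = (a, b) ↔ q.1.val = a.val ∧ q.2.val = b.val := by simp [Prod.ext_iff, Fin.ext_iff]
  simp only [this]
  split_ifs <;> omega

theorem cornerSum_all_cols (f : Fin m × Fin n → ℕ) (i : ℕ) :
    cornerSum f i 0 = ∑ a : Fin m with a.val < i, ∑ b, f (a, b) := by
  simp only [cornerSum, sum_filter, Fintype.sum_prod_type]
  exact sum_congr rfl fun a _ => by split_ifs <;> simp [*]

theorem cornerSum_all_rows (f : Fin m × Fin n → ℕ) (j : ℕ) :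
    cornerSum f m j = ∑ b : Fin n with j ≤ b.val, ∑ a, f (a, b) := by
  simp only [cornerSum, sum_filter, Fintype.sum_prod_type_right]
  exact sum_congr rfl fun b _ => by split_ifs <;> simp [*]

theorem IsStaircase.cornerSum_eq_min {f : Fin m × Fin n → ℕ} (hf : IsStaircase f) (i j : ℕ) :
    cornerSum f i j = min (cornerSum f i 0) (cornerSum f m j) := by
  set northWest := ∑ q with q.1.val < i ∧ q.2.val < j, f q
  set southEast := ∑ q with i ≤ q.1.val ∧ j ≤ q.2.val, f q
  have hrows : cornerSum f i 0 = cornerSum f i j + northWest := by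
    simp only [northWest, cornerSum, sum_filter, ← sum_add_distrib]
    exact sum_congr rfl fun q _ => by split_ifs <;> omega
  have hcols : cornerSum f m j = cornerSum f i j + southEast := by
    simp only [southEast, cornerSum, sum_filter, ← sum_add_distrib]
    exact sum_congr rfl fun q _ => by have := q.1.isLt; split_ifs <;> omega
  have hzero : northWest = 0 ∨ southEast = 0 := by
    by_contra! h
    obtain ⟨q, hq, hfq⟩ := exists_ne_zero_of_sum_ne_zero h.1
    obtain ⟨q', hq', hfq'⟩ := exists_ne_zero_of_sum_ne_zero h.2
    simp only [mem_filter, mem_univ, true_and] at hq hq'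
    exact mul_ne_zero hfq hfq' (hf q.1 q'.1 q.2 q'.2 (by omega) (by omega))
  omega

theorem IsStaircase.cornerSum_eq {f g : Fin m × Fin n → ℕ} (hf : IsStaircase f)
    (hg : IsStaircase g) (hrow : ∀ i, ∑ j, f (i, j) = ∑ j, g (i, j))
    (hcol : ∀ j, ∑ i, f (i, j) = ∑ i, g (i, j)) : cornerSum f = cornerSum g := by
  ext i j
  rw [hf.cornerSum_eq_min, hg.cornerSum_eq_min]
  simp only [cornerSum_all_cols, cornerSum_all_rows, hrow, hcol]

theorem eq_of_cornerSum_eq {f g : Fin m × Fin n → ℕ} (h : cornerSum f = cornerSum g) :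
    f = g := by
  ext ⟨a, b⟩
  have hf := cornerSum_add_cornerSum f a b
  have hg := cornerSum_add_cornerSum g a b
  simp only [h] at hf
  omega

theorem IsStaircase.eq_of_sum_eq {f g : Fin m × Fin n → ℕ} (hf : IsStaircase f)
    (hg : IsStaircase g) (hrow : ∀ i, ∑ j, f (i, j) = ∑ j, g (i, j))
    (hcol : ∀ j, ∑ i, f (i, j) = ∑ i, g (i, j)) : f = g :=
  eq_of_cornerSum_eq (hf.cornerSum_eq hg hrow hcol)

def block (x : ℕ → ℕ) (a : ℕ) : Finset ℕ :=
  Ico (∑ t ∈ range a, x t) (∑ t ∈ range (a + 1), x t)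

theorem card_block (x : ℕ → ℕ) (a : ℕ) : #(block x a) = x a := by
  simp [block, sum_range_succ]

theorem lt_of_mem_block {x : ℕ → ℕ} {a a' k k' : ℕ} (ha : a < a') (hk : k ∈ block x a)
    (hk' : k' ∈ block x a') : k < k' := by
  have : ∑ t ∈ range (a + 1), x t ≤ ∑ t ∈ range a', x t :=
    sum_le_sum_of_subset (range_subset_range.mpr ha)
  simp only [block, mem_Ico] at hk hk'
  omega

theorem block_subset_range {x : ℕ → ℕ} {a M : ℕ} (ha : a < M) :
    block x a ⊆ range (∑ t ∈ range M, x t) := by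
  have : ∑ t ∈ range (a + 1), x t ≤ ∑ t ∈ range M, x t :=
    sum_le_sum_of_subset (range_subset_range.mpr ha)
  intro k hk
  simp only [block, mem_Ico, mem_range] at hk ⊢
  omega

theorem sum_card_inter_block (x : ℕ → ℕ) (s : Finset ℕ) (M : ℕ) :
    ∑ a ∈ range M, #(s ∩ block x a) = #(s ∩ range (∑ t ∈ range M, x t)) := by
  induction M with
  | zero => simp
  | succ M ih =>
    have hsplit : range (∑ t ∈ range (M + 1), x t) = range (∑ t ∈ range M, x t) ∪ block x M := by
      ext k
      simp only [block, sum_range_succ, mem_union, mem_range, mem_Ico]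
      omega
    have hdisj : Disjoint (range (∑ t ∈ range M, x t)) (block x M) := by
      rw [range_eq_Ico]; exact Ico_disjoint_Ico_consecutive _ _ _
    rw [sum_range_succ, ih, hsplit, inter_union_distrib_left,
      card_union_of_disjoint (hdisj.mono inter_subset_right inter_subset_right)]

theorem sum_card_block_inter_block {x y : ℕ → ℕ} {M N a : ℕ}
    (hxy : ∑ t ∈ range M, x t = ∑ t ∈ range N, y t) (ha : a < M) :
    ∑ t ∈ range N, #(block x a ∩ block y t) = x a := by
  rw [sum_card_inter_block, ← hxy, inter_eq_left.mpr (block_subset_range ha), card_block]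

theorem exists_isStaircase (x : Fin m → ℕ) (y : Fin n → ℕ) (hxy : ∑ i, x i = ∑ j, y j) :
    ∃ f, IsStaircase f ∧ (∀ i, ∑ j, f (i, j) = x i) ∧ ∀ j, ∑ i, f (i, j) = y j := by
  obtain ⟨x', hx'⟩ : ∃ x' : ℕ → ℕ, ∀ i : Fin m, x' i = x i :=
    ⟨fun t => if h : t < m then x ⟨t, h⟩ else 0, by simp⟩
  obtain ⟨y', hy'⟩ : ∃ y' : ℕ → ℕ, ∀ j : Fin n, y' j = y j.rev :=
    ⟨fun t => if h : t < n then y (Fin.rev ⟨t, h⟩) else 0, by simp⟩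
  have hsum : ∑ t ∈ range m, x' t = ∑ t ∈ range n, y' t := by
    simp only [← Fin.sum_univ_eq_sum_range, hx', hy', hxy]
    exact (Equiv.sum_comp Fin.revPerm y).symm
  refine ⟨fun q => #(block x' q.1 ∩ block y' q.2.rev), ?_, fun i => ?_, fun j => ?_⟩
  · intro i i' j j' hi hj
    by_contra! h
    obtain ⟨k, hk⟩ := card_ne_zero.mp (left_ne_zero_of_mul h)
    obtain ⟨k', hk'⟩ := card_ne_zero.mp (right_ne_zero_of_mul h)
    rw [mem_inter] at hk hk'
    have : k < k' := lt_of_mem_block hi hk.1 hk'.1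
    have : k' < k := lt_of_mem_block (Fin.rev_lt_rev.mpr hj) hk'.2 hk.2
    omega
  · rw [← hx', ← sum_card_block_inter_block hsum i.isLt, ← Fin.sum_univ_eq_sum_range]
    exact Equiv.sum_comp Fin.revPerm fun j : Fin n => #(block x' i ∩ block y' j)
  · rw [← Fin.rev_rev j, ← hy', ← sum_card_block_inter_block hsum.symm j.rev.isLt,
      ← Fin.sum_univ_eq_sum_range, Fin.rev_rev]
    simp only [inter_comm]

end Staircase

open Staircase in
/-- The map sending a staircase monomial (given by its exponent matrix) to the
`(m+n)`-tuple of its row sums and column sums is a bijection onto the set of tuples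
`(x, y)` with `∑ xᵢ = ∑ yⱼ`. -/
theorem stmt11 (m n : ℕ) :
    Function.Injective
      (fun p : {p : Fin m × Fin n →₀ ℕ //
          ∀ (i i' : Fin m) (j j' : Fin n), i < i' → j < j' → p (i, j) * p (i', j') = 0} =>
        ((fun i => ∑ j, p.1 (i, j), fun j => ∑ i, p.1 (i, j)) : (Fin m → ℕ) × (Fin n → ℕ)))
    ∧ Set.range
      (fun p : {p : Fin m × Fin n →₀ ℕ //
          ∀ (i i' : Fin m) (j j' : Fin n), i < i' → j < j' → p (i, j) * p (i', j') = 0} =>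
        ((fun i => ∑ j, p.1 (i, j), fun j => ∑ i, p.1 (i, j)) : (Fin m → ℕ) × (Fin n → ℕ)))
      = {xy : (Fin m → ℕ) × (Fin n → ℕ) | ∑ i, xy.1 i = ∑ j, xy.2 j} := by
  refine ⟨fun p q hpq => ?_, Set.ext fun ⟨x, y⟩ => ⟨?_, fun hxy => ?_⟩⟩
  · obtain ⟨hrow, hcol⟩ := Prod.mk.inj hpq
    exact Subtype.ext <| DFunLike.coe_injective <|
      IsStaircase.eq_of_sum_eq p.2 q.2 (congrFun hrow) (congrFun hcol)
  · rintro ⟨p, hp⟩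
    rw [← hp]
    exact (sum_comm : _ = ∑ j, ∑ i, p.1 (i, j))
  · obtain ⟨f, hf, hrow, hcol⟩ := exists_isStaircase x y hxy
    exact ⟨⟨Finsupp.equivFunOnFinite.symm f, hf⟩, Prod.ext (funext hrow) (funext hcol)⟩
end

section
/- Let k be a field of characteristic p, X a 2×2 matrix of variables, m the homogeneous maximal ideal of k[X], and I_2(X) the principal ideal generated by the determinant. For q a power of p and s a real number with 0 < s ≤ 1 and sq an integer, the k-vector space dimension of k[X]/(m^{sq} + m^{[q]} + I_2(X)) equals (s^3/3)q^3 + (s^2/2)q^2 + (s/6)q. -/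
/-!
Modulo `det = X₀₀X₁₁ - X₀₁X₁₀` a monomial `X^a` only depends on its weight: its degree `d`, its
first-row degree `i` and its first-column degree `j`, because `det` trades the exponents
`diag = X₀₀X₁₁` for `antidiag = X₀₁X₁₀` without changing the weight. Conversely, sending `X^a` to
its weight is a ring map into the monoid algebra of weights that kills `det`; truncated to
weights of degree `< n` it also kills `𝔪ⁿ`. So `k[X]/(𝔪ⁿ + (det))` has a basis indexed by the
triples `i, j ≤ d < n`, and its dimension is `∑_{d<n} (d+1)² = n(n+1)(2n+1)/6`. As `sq ≤ q`, the
Frobenius power `𝔪^{[q]}` lies in `𝔪^{sq}`, and `n = sq = s q` gives the claimed polynomial.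
-/

open MvPolynomial Finsupp Finset

lemma span_X_pow_le_pow_idealOfVars {σ R : Type*} [CommSemiring R] {n q : ℕ} (h : n ≤ q) :
    Ideal.span (Set.range fun v : σ => (X v : MvPolynomial σ R) ^ q) ≤ idealOfVars σ R ^ n :=
  Ideal.span_le.mpr <| Set.range_subset_iff.mpr fun v =>
    Ideal.pow_le_pow_right h (Ideal.pow_mem_pow (Ideal.subset_span (Set.mem_range_self v)) q)

lemma six_mul_sum_range_succ_sq (n : ℕ) :
    6 * ∑ d ∈ range n, (d + 1) ^ 2 = n * (n + 1) * (2 * n + 1) := by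
  induction n with
  | zero => simp
  | succ n ih => rw [sum_range_succ, mul_add, ih]; ring

lemma monomial_add_nsmul_sub_mem_span {σ R : Type*} [CommRing R] (b s s' : σ →₀ ℕ) (m : ℕ)
    (c : R) : monomial (b + m • s) c - monomial (b + m • s') c ∈
      Ideal.span {monomial s (1 : R) - monomial s' 1} := by
  have h (t : σ →₀ ℕ) : monomial (b + m • t) c = monomial b c * monomial t 1 ^ m := by
    rw [monomial_pow, monomial_mul, one_pow, mul_one]
  rw [h, h, ← mul_sub, Ideal.mem_span_singleton]
  exact (sub_dvd_pow_sub_pow _ _ m).mul_left _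

namespace Determinantal

noncomputable section

def weight : (Fin 2 × Fin 2 →₀ ℕ) →+ ℕ × ℕ × ℕ :=
  degree.prod <| AddMonoidHom.prod (applyAddHom (0, 0) + applyAddHom (0, 1))
    (applyAddHom (0, 0) + applyAddHom (1, 0))

lemma weight_apply (a : Fin 2 × Fin 2 →₀ ℕ) :
    weight a = (a (0, 0) + a (0, 1) + a (1, 0) + a (1, 1), a (0, 0) + a (0, 1),
      a (0, 0) + a (1, 0)) := by
  simp [weight, degree_eq_sum, Fintype.sum_prod_type, Fin.sum_univ_two, add_assoc]

/-- The exponent vector of weight `t` with `a (0, 0) = 0` or `a (1, 1) = 0`. -/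
def normalForm (t : ℕ × ℕ × ℕ) : Fin 2 × Fin 2 →₀ ℕ :=
  equivFunOnFinite.symm fun v =>
    ![![t.2.1 + t.2.2 - t.1, min t.2.1 (t.1 - t.2.2)],
      ![min t.2.2 (t.1 - t.2.1), t.1 - t.2.1 - t.2.2]] v.1 v.2

lemma weight_normalForm {t : ℕ × ℕ × ℕ} (hi : t.2.1 ≤ t.1) (hj : t.2.2 ≤ t.1) :
    weight (normalForm t) = t := by
  obtain ⟨d, i, j⟩ := t
  simp only at hi hj
  simp [weight_apply, normalForm]
  omega

def diag : Fin 2 × Fin 2 →₀ ℕ := single (0, 0) 1 + single (1, 1) 1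

def antidiag : Fin 2 × Fin 2 →₀ ℕ := single (0, 1) 1 + single (1, 0) 1

lemma exists_eq_add_nsmul_diag (a : Fin 2 × Fin 2 →₀ ℕ) :
    ∃ (b : Fin 2 × Fin 2 →₀ ℕ) (m : ℕ),
      a = b + m • diag ∧ normalForm (weight a) = b + m • antidiag := by
  refine ⟨a - min (a (0, 0)) (a (1, 1)) • diag, min (a (0, 0)) (a (1, 1)), ?_, ?_⟩ <;>
  · ext ⟨i, j⟩
    fin_cases i <;> fin_cases j <;> simp [weight_apply, normalForm, diag, antidiag] <;> omega

variable {R : Type*} [CommRing R]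

def det : MvPolynomial (Fin 2 × Fin 2) R := X (0, 0) * X (1, 1) - X (0, 1) * X (1, 0)

lemma det_eq : (det : MvPolynomial (Fin 2 × Fin 2) R) = monomial diag 1 - monomial antidiag 1 := by
  simp only [det, X, monomial_mul, mul_one, diag, antidiag]

lemma monomial_sub_monomial_normalForm_mem (a : Fin 2 × Fin 2 →₀ ℕ) (c : R) :
    monomial a c - monomial (normalForm (weight a)) c ∈ Ideal.span {det} := by
  obtain ⟨b, m, ha, hnf⟩ := exists_eq_add_nsmul_diag a
  rw [hnf, ha, det_eq]
  exact monomial_add_nsmul_sub_mem_span b _ _ m c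

def weights (n : ℕ) : Finset (ℕ × ℕ × ℕ) :=
  ((range n).sigma fun d => range (d + 1) ×ˢ range (d + 1)).map
    (Equiv.sigmaEquivProd ℕ (ℕ × ℕ)).toEmbedding

lemma mem_weights {n : ℕ} {t : ℕ × ℕ × ℕ} :
    t ∈ weights n ↔ t.1 < n ∧ t.2.1 ≤ t.1 ∧ t.2.2 ≤ t.1 := by
  simp [weights, Finset.mem_map_equiv]

lemma card_weights (n : ℕ) : #(weights n) = ∑ d ∈ range n, (d + 1) ^ 2 := by
  simp [weights, sq]

lemma weight_mem_weights_iff {n : ℕ} {a : Fin 2 × Fin 2 →₀ ℕ} :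
    weight a ∈ weights n ↔ degree a < n := by
  simp only [mem_weights, weight_apply, degree_eq_sum, Fintype.sum_prod_type, Fin.sum_univ_two]
  omega

variable (R) in
def truncWeight (n : ℕ) : MvPolynomial (Fin 2 × Fin 2) R →ₗ[R] (weights n →₀ R) :=
  lsubtypeDomain (weights n : Set (ℕ × ℕ × ℕ)) ∘ₗ
    (AddMonoidAlgebra.coeffLinearEquiv R).toLinearMap ∘ₗ
      (AddMonoidAlgebra.mapDomainAlgHom R R weight).toLinearMap

lemma truncWeight_monomial (n : ℕ) (a : Fin 2 × Fin 2 →₀ ℕ) (c : R) (t : weights n) :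
    truncWeight R n (monomial a c) t = if weight a = t then c else 0 := by
  rw [truncWeight, LinearMap.comp_apply, LinearMap.comp_apply, lsubtypeDomain_apply,
    subtypeDomain_apply]
  simp [monomial, single_apply]

lemma truncWeight_monomial_of_le {n : ℕ} {a : Fin 2 × Fin 2 →₀ ℕ} (h : n ≤ degree a) (c : R) :
    truncWeight R n (monomial a c) = 0 := by
  ext t
  have ha : weight a ≠ t := fun ha => (weight_mem_weights_iff.mp (ha ▸ t.2)).not_ge h
  simp [truncWeight_monomial, ha]

lemma truncWeight_monomial_of_lt {n : ℕ} {a : Fin 2 × Fin 2 →₀ ℕ} (h : degree a < n) (c : R) :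
    truncWeight R n (monomial a c) = single ⟨weight a, weight_mem_weights_iff.mpr h⟩ c := by
  ext t
  simp [truncWeight_monomial, single_apply, Subtype.ext_iff]

lemma truncWeight_eq_zero_of_mem_pow {n : ℕ} {f : MvPolynomial (Fin 2 × Fin 2) R}
    (hf : f ∈ idealOfVars _ R ^ n) : truncWeight R n f = 0 := by
  rw [f.as_sum, map_sum]
  exact sum_eq_zero fun a ha =>
    truncWeight_monomial_of_le ((mem_pow_idealOfVars_iff n f).mp hf a ha) _

lemma truncWeight_eq_zero_of_mem_span_det {n : ℕ} {f : MvPolynomial (Fin 2 × Fin 2) R}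
    (hf : f ∈ Ideal.span {det}) : truncWeight R n f = 0 := by
  obtain ⟨r, rfl⟩ := Ideal.mem_span_singleton'.mp hf
  have hdet : AddMonoidAlgebra.mapDomainAlgHom R R weight
      (det : MvPolynomial (Fin 2 × Fin 2) R) = 0 := by
    rw [det_eq, map_sub, sub_eq_zero]
    simp [monomial, diag, antidiag, weight_apply]
  rw [truncWeight, LinearMap.comp_apply, LinearMap.comp_apply, AlgHom.toLinearMap_apply, map_mul,
    hdet, mul_zero, map_zero, map_zero]

variable (R) in
def normalFormMap (n : ℕ) : (weights n →₀ R) →ₗ[R] MvPolynomial (Fin 2 × Fin 2) R :=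
  lsum R fun t => monomial (normalForm t)

lemma truncWeight_normalFormMap (n : ℕ) (x : weights n →₀ R) :
    truncWeight R n (normalFormMap R n x) = x := by
  induction x using Finsupp.induction_linear with
  | zero => simp
  | add x y hx hy => simp [hx, hy]
  | single t c =>
    obtain ⟨-, hi, hj⟩ := mem_weights.mp t.2
    have hw := weight_normalForm hi hj
    have hdeg : degree (normalForm t.1) < n := by rw [← weight_mem_weights_iff, hw]; exact t.2
    rw [normalFormMap, lsum_single, truncWeight_monomial_of_lt hdeg]
    simp [hw]

lemma sub_normalFormMap_truncWeight_mem (n : ℕ) (f : MvPolynomial (Fin 2 × Fin 2) R) :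
    f - normalFormMap R n (truncWeight R n f) ∈ idealOfVars _ R ^ n ⊔ Ideal.span {det} := by
  induction f using MvPolynomial.induction_on' with
  | monomial a c =>
    rcases lt_or_ge (degree a) n with h | h
    · rw [truncWeight_monomial_of_lt h, normalFormMap, lsum_single]
      exact Ideal.mem_sup_right (monomial_sub_monomial_normalForm_mem a c)
    · rw [truncWeight_monomial_of_le h, map_zero, sub_zero]
      exact Ideal.mem_sup_left ((mem_pow_idealOfVars_iff n _).mpr fun b hb =>
        (Finset.mem_singleton.mp (support_monomial_subset hb)) ▸ h)
  | add f g hf hg =>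
    rw [map_add, map_add, add_sub_add_comm]
    exact add_mem hf hg

lemma ker_truncWeight (n : ℕ) :
    LinearMap.ker (truncWeight R n) =
      (idealOfVars _ R ^ n ⊔ Ideal.span {det}).restrictScalars R := by
  ext f
  simp only [LinearMap.mem_ker, Submodule.restrictScalars_mem]
  constructor
  · intro hf
    simpa [hf] using sub_normalFormMap_truncWeight_mem n f
  · intro hf
    obtain ⟨g, hg, h, hh, rfl⟩ := Submodule.mem_sup.mp hf
    rw [map_add, truncWeight_eq_zero_of_mem_pow hg, truncWeight_eq_zero_of_mem_span_det hh,
      add_zero]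

variable (R) in
def quotientEquiv (n : ℕ) :
    (MvPolynomial (Fin 2 × Fin 2) R ⧸ (idealOfVars _ R ^ n ⊔ Ideal.span {det})) ≃ₗ[R]
      (weights n →₀ R) :=
  (Submodule.Quotient.restrictScalarsEquiv R _).symm ≪≫ₗ
    Submodule.quotEquivOfEq _ _ (ker_truncWeight n).symm ≪≫ₗ
      (truncWeight R n).quotKerEquivOfSurjective
        (Function.LeftInverse.surjective (g := normalFormMap R n) (truncWeight_normalFormMap n))

theorem finrank_quotient_pow_idealOfVars_sup_span_det [Nontrivial R] (n : ℕ) :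
    Module.finrank R (MvPolynomial (Fin 2 × Fin 2) R ⧸ (idealOfVars _ R ^ n ⊔ Ideal.span {det})) =
      ∑ d ∈ range n, (d + 1) ^ 2 := by
  rw [(quotientEquiv R n).finrank_eq, Module.finrank_finsupp_self, Fintype.card_coe, card_weights]

end

end Determinantal

theorem stmt15_general (k : Type*) [Field k] (p : ℕ) (e : ℕ)
    (s : ℝ) (hs1 : s ≤ 1) (sq : ℕ) (hsq : (sq : ℝ) = s * (p : ℝ) ^ e) :
    (Module.finrank k
      (MvPolynomial (Fin 2 × Fin 2) k ⧸
        (Ideal.span (Set.range (MvPolynomial.X : Fin 2 × Fin 2 → MvPolynomial (Fin 2 × Fin 2) k)) ^ sq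
          ⊔ Ideal.span (Set.range fun v : Fin 2 × Fin 2 =>
              (MvPolynomial.X v : MvPolynomial (Fin 2 × Fin 2) k) ^ p ^ e)
          ⊔ Ideal.span {(MvPolynomial.X (0, 0) * MvPolynomial.X (1, 1) -
              MvPolynomial.X (0, 1) * MvPolynomial.X (1, 0) :
                MvPolynomial (Fin 2 × Fin 2) k)})) : ℝ)
    = s ^ 3 / 3 * ((p : ℝ) ^ e) ^ 3 + s ^ 2 / 2 * ((p : ℝ) ^ e) ^ 2
        + s / 6 * (p : ℝ) ^ e := by
  have hq : sq ≤ p ^ e := by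
    have : s * (p : ℝ) ^ e ≤ (p : ℝ) ^ e := mul_le_of_le_one_left (by positivity) hs1
    exact_mod_cast hsq ▸ this
  rw [sup_eq_left.mpr (span_X_pow_le_pow_idealOfVars hq), ← Determinantal.det,
    Determinantal.finrank_quotient_pow_idealOfVars_sup_span_det sq]
  have h6 := congrArg (Nat.cast : ℕ → ℝ) (six_mul_sum_range_succ_sq sq)
  push_cast at h6 ⊢
  rw [hsq] at h6
  linear_combination h6 / 6

/-- For `X` a `2×2` matrix of variables over a field `k` of characteristic `p`,
`q = pᵉ`, and `0 < s ≤ 1` with `sq ∈ ℤ`, the `k`-dimension of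
`k[X]/(𝔪^{sq} + 𝔪^{[q]} + I₂(X))` equals `(s³/3)q³ + (s²/2)q² + (s/6)q`. -/
theorem stmt15 (k : Type*) [Field k] (p : ℕ) (hp : p.Prime) [CharP k p] (e : ℕ)
    (s : ℝ) (hs0 : 0 < s) (hs1 : s ≤ 1) (sq : ℕ) (hsq : (sq : ℝ) = s * (p : ℝ) ^ e) :
    (Module.finrank k
      (MvPolynomial (Fin 2 × Fin 2) k ⧸
        (Ideal.span (Set.range (MvPolynomial.X : Fin 2 × Fin 2 → MvPolynomial (Fin 2 × Fin 2) k)) ^ sq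
          ⊔ Ideal.span (Set.range fun v : Fin 2 × Fin 2 =>
              (MvPolynomial.X v : MvPolynomial (Fin 2 × Fin 2) k) ^ p ^ e)
          ⊔ Ideal.span {(MvPolynomial.X (0, 0) * MvPolynomial.X (1, 1) -
              MvPolynomial.X (0, 1) * MvPolynomial.X (1, 0) :
                MvPolynomial (Fin 2 × Fin 2) k)})) : ℝ)
    = s ^ 3 / 3 * ((p : ℝ) ^ e) ^ 3 + s ^ 2 / 2 * ((p : ℝ) ^ e) ^ 2
        + s / 6 * (p : ℝ) ^ e :=
  stmt15_general k p e s hs1 sq hsq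
end

section
/- Let k be a field of characteristic p, X a 2×2 matrix of variables, m the homogeneous maximal ideal of k[X], and I_2(X) the ideal generated by the determinant of X. For q a power of p and s ≥ 2 with sq an integer, the k-vector space dimension of k[X]/(m^{sq} + m^{[q]} + I_2(X)) equals (4/3)q^3 − (1/3)q. -/
/-!
Modulo `I₂(X)` we have `x₀₀x₁₁ = x₀₁x₁₀`, so the monomial `x₀₀^a x₀₁^b x₁₀^c x₁₁^d` is congruent
to its normal form, obtained by trading `t = min a d` factors `x₀₀x₁₁` for `x₀₁x₁₀`; two monomials
are congruent iff they have the same normal form. A normal form `(a, b, c, d)` (so `a = 0` or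
`d = 0`) dies modulo `𝔪^[q] + I₂(X)` iff some monomial of its class
`(a + t, b - t, c - t, d + t)`, `t ≤ min b c`, has an exponent `≥ q`, i.e. iff `b ≥ q`, `c ≥ q` or
`a + d + min b c ≥ q`. The surviving normal forms have degree `< 2q`, so `𝔪^{sq}` adds nothing
when `s ≥ 2`, and for fixed `b, c < q` there are `2(q - min b c) - 1` of them; summing over
`b, c` gives `(4q³ - q)/3`.
-/

open MvPolynomial Finset Module

theorem finrank_quotient_eq_of_section {R A W : Type*} [CommRing R] [CommRing A] [Algebra R A]
    [AddCommGroup W] [Module R W] {J : Ideal A} (φ : A →ₗ[R] W) (θ : W →ₗ[R] A)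
    (hφθ : ∀ w, φ (θ w) = w) (hJ : ∀ f ∈ J, φ f = 0) (hθφ : ∀ f, f - θ (φ f) ∈ J) :
    finrank R (A ⧸ J) = finrank R W := by
  let L : W →ₗ[R] A ⧸ J := (Ideal.Quotient.mkₐ R J).toLinearMap ∘ₗ θ
  have hinj : Function.Injective L := by
    refine (injective_iff_map_eq_zero L).mpr fun w hw => ?_
    rw [← hφθ w]
    exact hJ _ (Ideal.Quotient.eq_zero_iff_mem.mp hw)
  have hsurj : Function.Surjective L := by
    rintro ⟨f⟩
    exact ⟨φ f, Ideal.Quotient.eq.mpr (by simpa using J.neg_mem (hθφ f))⟩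
  exact (LinearEquiv.ofBijective L ⟨hinj, hsurj⟩).finrank_eq.symm

theorem MvPolynomial.mem_span_X_pow_iff {σ R : Type*} [CommSemiring R] (q : ℕ)
    (f : MvPolynomial σ R) :
    f ∈ Ideal.span (Set.range fun v => X v ^ q) ↔ ∀ m ∈ f.support, ∃ v, q ≤ m v := by
  have hgen : (Set.range fun v => (X v : MvPolynomial σ R) ^ q) =
      (fun m => monomial m 1) '' Set.range fun v => Finsupp.single v q := by
    rw [← Set.range_comp]
    simp [Function.comp_def, X_pow_eq_monomial]
  simp [hgen, mem_ideal_span_monomial_image, Finsupp.single_le_iff]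

theorem MvPolynomial.monomial_mem_span_X_pow {σ R : Type*} [CommSemiring R] {q : ℕ}
    {m : σ →₀ ℕ} {v : σ} (h : q ≤ m v) :
    monomial m (1 : R) ∈ Ideal.span (Set.range fun v => X v ^ q) :=
  (mem_span_X_pow_iff q _).mpr fun _ hm =>
    ⟨v, by rwa [mem_singleton.mp (support_monomial_subset hm)]⟩

namespace DetHilbertKunz

/-- Exponents `(a, b, c, d)` stand for the monomial `x₀₀^a x₀₁^b x₁₀^c x₁₁^d`. -/
def standardExps (q : ℕ) : Finset (ℕ × ℕ × ℕ × ℕ) :=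
  (range q ×ˢ range q ×ˢ range q ×ˢ range q).filter fun x =>
    (x.1 = 0 ∨ x.2.2.2 = 0) ∧ x.1 + x.2.2.2 + min x.2.1 x.2.2.1 < q

theorem mem_standardExps {q a b c d : ℕ} :
    (a, b, c, d) ∈ standardExps q ↔ (a = 0 ∨ d = 0) ∧ a + d + min b c < q ∧ b < q ∧ c < q := by
  simp only [standardExps, mem_filter, mem_product, mem_range]
  omega

def axisPoints (t : ℕ) : Finset (ℕ × ℕ) := range t ×ˢ {0} ∪ {0} ×ˢ range t

theorem card_axisPoints {t : ℕ} (ht : 0 < t) : #(axisPoints t) = 2 * t - 1 := by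
  have hinter : range t ×ˢ {0} ∩ {0} ×ˢ range t = {(0, 0)} := by
    ext ⟨a, d⟩
    simp only [mem_inter, mem_product, mem_range, mem_singleton, Prod.mk.injEq]
    omega
  have hcard := card_union_add_card_inter (range t ×ˢ {0}) ({0} ×ˢ range t)
  rw [hinter, card_product, card_product] at hcard
  simp only [card_range, card_singleton] at hcard
  rw [axisPoints]
  omega

theorem card_standardExps_eq_sum (q : ℕ) :
    #(standardExps q) = ∑ b ∈ range q, ∑ c ∈ range q, (2 * (q - min b c) - 1) := by
  rw [card_eq_sum_card_fiberwise (f := fun x => (x.2.1, x.2.2.1)) (t := range q ×ˢ range q),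
    sum_product]
  · refine sum_congr rfl fun b hb => sum_congr rfl fun c hc => ?_
    rw [mem_range] at hb hc
    rw [← card_axisPoints (by omega), ← card_image_of_injective _
      (f := fun ad : ℕ × ℕ => (ad.1, b, c, ad.2)) (fun x y h => by simpa [Prod.ext_iff] using h)]
    congr 1
    ext ⟨a, b', c', d⟩
    simp only [axisPoints, mem_filter, mem_standardExps, mem_image, mem_union, mem_product,
      mem_range, mem_singleton, Prod.mk.injEq, Prod.exists]
    constructor
    · rintro ⟨h, rfl, rfl⟩
      exact ⟨a, d, by omega⟩
    · rintro ⟨a', d', h, rfl, rfl, rfl, rfl⟩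
      omega
  · rintro ⟨a, b, c, d⟩ hx
    rw [mem_coe, mem_standardExps] at hx
    simp only [coe_product, coe_range, Set.mem_prod, Set.mem_Iio]
    omega

theorem sum_two_mul_max_add_one (q : ℕ) :
    3 * ∑ b ∈ range q, ∑ c ∈ range q, (2 * max b c + 1) + q = 4 * q ^ 3 := by
  induction q with
  | zero => simp
  | succ n ih =>
    have hrow : ∀ b ∈ range n, ∑ c ∈ range (n + 1), (2 * max b c + 1)
        = ∑ c ∈ range n, (2 * max b c + 1) + (2 * n + 1) := by
      intro b hb
      rw [sum_range_succ, max_eq_right (mem_range.mp hb).le]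
    have hlast : ∑ c ∈ range (n + 1), (2 * max n c + 1) = (n + 1) * (2 * n + 1) := by
      rw [sum_congr rfl fun c hc => by rw [max_eq_left (Nat.lt_succ_iff.mp (mem_range.mp hc))],
        sum_const, card_range, smul_eq_mul]
    rw [sum_range_succ, sum_congr rfl hrow, hlast, sum_add_distrib, sum_const, card_range,
      smul_eq_mul]
    nlinarith [ih]

theorem card_standardExps (q : ℕ) : 3 * #(standardExps q) + q = 4 * q ^ 3 := by
  have hreflect : ∑ b ∈ range q, ∑ c ∈ range q, (2 * (q - min b c) - 1)
      = ∑ b ∈ range q, ∑ c ∈ range q, (2 * max b c + 1) := by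
    rw [← sum_range_reflect]
    refine sum_congr rfl fun b hb => ?_
    rw [← sum_range_reflect]
    refine sum_congr rfl fun c hc => ?_
    rw [mem_range] at hb hc
    omega
  rw [card_standardExps_eq_sum, hreflect, sum_two_mul_max_add_one]

noncomputable def expOf (x : ℕ × ℕ × ℕ × ℕ) : Fin 2 × Fin 2 →₀ ℕ :=
  Finsupp.single (0, 0) x.1 + Finsupp.single (0, 1) x.2.1 + Finsupp.single (1, 0) x.2.2.1 +
    Finsupp.single (1, 1) x.2.2.2

def coords (m : Fin 2 × Fin 2 →₀ ℕ) : ℕ × ℕ × ℕ × ℕ := (m (0, 0), m (0, 1), m (1, 0), m (1, 1))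

theorem coords_expOf (x : ℕ × ℕ × ℕ × ℕ) : coords (expOf x) = x := by
  simp [coords, expOf]

theorem expOf_coords (m : Fin 2 × Fin 2 →₀ ℕ) : expOf (coords m) = m := by
  ext ⟨i, j⟩
  fin_cases i <;> fin_cases j <;> simp [coords, expOf]

theorem coords_add (m m' : Fin 2 × Fin 2 →₀ ℕ) : coords (m + m') = coords m + coords m' := rfl

theorem expOf_add (x y : ℕ × ℕ × ℕ × ℕ) : expOf (x + y) = expOf x + expOf y := by
  simp only [expOf, Prod.fst_add, Prod.snd_add, Finsupp.single_add]
  abel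

theorem degree_eq_sum_coords (m : Fin 2 × Fin 2 →₀ ℕ) :
    m.degree = (coords m).1 + (coords m).2.1 + (coords m).2.2.1 + (coords m).2.2.2 := by
  simp [Finsupp.degree_eq_sum, Fintype.sum_prod_type, coords, add_assoc]

def normalize (x : ℕ × ℕ × ℕ × ℕ) : ℕ × ℕ × ℕ × ℕ :=
  (x.1 - min x.1 x.2.2.2, x.2.1 + min x.1 x.2.2.2, x.2.2.1 + min x.1 x.2.2.2,
    x.2.2.2 - min x.1 x.2.2.2)

theorem normalize_of_mem_standardExps {q : ℕ} {x : ℕ × ℕ × ℕ × ℕ} (hx : x ∈ standardExps q) :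
    normalize x = x := by
  obtain ⟨a, b, c, d⟩ := x
  rw [mem_standardExps] at hx
  simp only [normalize, Prod.mk.injEq]
  omega

theorem normalize_add_diag (x : ℕ × ℕ × ℕ × ℕ) :
    normalize (x + (1, 0, 0, 1)) = normalize (x + (0, 1, 1, 0)) := by
  simp only [normalize, Prod.fst_add, Prod.snd_add, Prod.mk.injEq]
  omega

theorem normalize_coords_notMem_of_le_apply {q : ℕ} {m : Fin 2 × Fin 2 →₀ ℕ}
    {v : Fin 2 × Fin 2} (h : q ≤ m v) : normalize (coords m) ∉ standardExps q := by
  obtain ⟨i, j⟩ := v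
  simp only [normalize, coords, mem_standardExps]
  fin_cases i <;> fin_cases j <;> simp at h <;> omega

theorem normalize_coords_notMem_of_le_degree {q : ℕ} {m : Fin 2 × Fin 2 →₀ ℕ}
    (h : 2 * q ≤ m.degree) : normalize (coords m) ∉ standardExps q := by
  rw [degree_eq_sum_coords] at h
  simp only [normalize, mem_standardExps]
  omega

variable {R : Type*} [CommRing R]

noncomputable def detX : MvPolynomial (Fin 2 × Fin 2) R :=
  X (0, 0) * X (1, 1) - X (0, 1) * X (1, 0)

theorem monomial_expOf_diag (t : ℕ) :
    (monomial (expOf (t, 0, 0, t)) 1 : MvPolynomial (Fin 2 × Fin 2) R) =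
      (X (0, 0) * X (1, 1)) ^ t := by
  simp [expOf, mul_pow, X_pow_eq_monomial, monomial_mul]

theorem monomial_expOf_antidiag (t : ℕ) :
    (monomial (expOf (0, t, t, 0)) 1 : MvPolynomial (Fin 2 × Fin 2) R) =
      (X (0, 1) * X (1, 0)) ^ t := by
  simp [expOf, mul_pow, X_pow_eq_monomial, monomial_mul]

theorem monomial_expOf_sub_mem_span_detX (z : ℕ × ℕ × ℕ × ℕ) (t : ℕ) :
    (monomial (expOf (z + (t, 0, 0, t))) 1 - monomial (expOf (z + (0, t, t, 0))) 1 :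
      MvPolynomial (Fin 2 × Fin 2) R) ∈ Ideal.span {detX} := by
  rw [Ideal.mem_span_singleton, expOf_add, expOf_add, ← mul_one (1 : R), ← monomial_mul,
    ← monomial_mul, monomial_expOf_diag, monomial_expOf_antidiag, ← mul_sub]
  exact (sub_dvd_pow_sub_pow _ _ t).mul_left _

theorem monomial_sub_monomial_normalize_mem (m : Fin 2 × Fin 2 →₀ ℕ) :
    (monomial m 1 - monomial (expOf (normalize (coords m))) 1 : MvPolynomial (Fin 2 × Fin 2) R) ∈
      Ideal.span {detX} := by
  set t := min (m (0, 0)) (m (1, 1))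
  convert monomial_expOf_sub_mem_span_detX (R := R)
    (m (0, 0) - t, m (0, 1), m (1, 0), m (1, 1) - t) t using 4
  · conv_lhs => rw [← expOf_coords m]
    congr 1
    simp only [coords, Prod.mk_add_mk, Prod.mk.injEq]
    omega
  · simp only [normalize, coords, Prod.mk_add_mk, add_zero, t]

theorem monomial_expOf_mem_of_notMem {q : ℕ} {x : ℕ × ℕ × ℕ × ℕ} (hx : x.1 = 0 ∨ x.2.2.2 = 0)
    (hxq : x ∉ standardExps q) :
    (monomial (expOf x) 1 : MvPolynomial (Fin 2 × Fin 2) R) ∈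
      Ideal.span (Set.range fun v => X v ^ q) ⊔ Ideal.span {detX} := by
  obtain ⟨a, b, c, d⟩ := x
  dsimp only at hx
  rw [mem_standardExps] at hxq
  by_cases hbc : q ≤ b ∨ q ≤ c
  · refine Ideal.mem_sup_left ?_
    rcases hbc with hb | hc
    · exact monomial_mem_span_X_pow (v := (0, 1)) (by simpa [expOf] using hb)
    · exact monomial_mem_span_X_pow (v := (1, 0)) (by simpa [expOf] using hc)
  -- trade `min b c` factors `x₀₁x₁₀` for `x₀₀x₁₁`; then `a + min b c` or `d + min b c` is `≥ q`
  set z := (a, b - min b c, c - min b c, d)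
  have hsplit : (a, b, c, d) = z + (0, min b c, min b c, 0) := by
    simp only [z, Prod.mk_add_mk, Prod.mk.injEq]
    omega
  have hshift : (monomial (expOf (z + (min b c, 0, 0, min b c))) 1 :
      MvPolynomial (Fin 2 × Fin 2) R) ∈ Ideal.span (Set.range fun v => X v ^ q) := by
    rcases hx with ha | hd
    · exact monomial_mem_span_X_pow (v := (1, 1)) (by simp [z, expOf]; omega)
    · exact monomial_mem_span_X_pow (v := (0, 0)) (by simp [z, expOf]; omega)
  rw [hsplit, ← sub_sub_cancel (monomial (expOf (z + (min b c, 0, 0, min b c))) (1 : R))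
    (monomial (expOf (z + (0, min b c, min b c, 0))) 1)]
  exact sub_mem (Ideal.mem_sup_left hshift)
    (Ideal.mem_sup_right (monomial_expOf_sub_mem_span_detX z _))

variable (R) (q : ℕ)

noncomputable def normalFormSingle (m : Fin 2 × Fin 2 →₀ ℕ) : standardExps q → R :=
  if h : normalize (coords m) ∈ standardExps q then Pi.single ⟨_, h⟩ 1 else 0

noncomputable def standardCoeffs : MvPolynomial (Fin 2 × Fin 2) R →ₗ[R] (standardExps q → R) :=
  (basisMonomials _ R).constr R (normalFormSingle R q)

noncomputable def standardLift : (standardExps q → R) →ₗ[R] MvPolynomial (Fin 2 × Fin 2) R :=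
  Fintype.linearCombination R fun x => monomial (expOf x) 1

variable {R q}

theorem standardCoeffs_monomial (m : Fin 2 × Fin 2 →₀ ℕ) (c : R) :
    standardCoeffs R q (monomial m c) = c • normalFormSingle R q m := by
  rw [← mul_one c, ← smul_eq_mul, ← smul_monomial, map_smul, smul_eq_mul, mul_one]
  congr 1
  simpa [standardCoeffs] using (basisMonomials _ R).constr_basis R (normalFormSingle R q) m

theorem standardCoeffs_eq_zero {f : MvPolynomial (Fin 2 × Fin 2) R}
    (hf : ∀ m ∈ f.support, normalize (coords m) ∉ standardExps q) :
    standardCoeffs R q f = 0 := by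
  rw [f.as_sum, map_sum]
  refine sum_eq_zero fun m hm => ?_
  rw [standardCoeffs_monomial, normalFormSingle, dif_neg (hf m hm), smul_zero]

theorem normalFormSingle_expOf (x : standardExps q) : normalFormSingle R q (expOf x) = Pi.single x 1 := by
  simp [normalFormSingle, coords_expOf, normalize_of_mem_standardExps x.2]

theorem standardCoeffs_standardLift (w : standardExps q → R) :
    standardCoeffs R q (standardLift R q w) = w := by
  rw [standardLift, Fintype.linearCombination_apply, map_sum]
  conv_rhs => rw [← univ_sum_single w]
  refine sum_congr rfl fun x _ => ?_
  rw [map_smul, standardCoeffs_monomial, one_smul, normalFormSingle_expOf, ← Pi.single_smul, smul_eq_mul,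
    mul_one]

theorem standardCoeffs_eq_zero_of_mem_pow {n : ℕ} (hn : 2 * q ≤ n)
    {f : MvPolynomial (Fin 2 × Fin 2) R} (hf : f ∈ idealOfVars _ R ^ n) :
    standardCoeffs R q f = 0 :=
  standardCoeffs_eq_zero fun m hm =>
    normalize_coords_notMem_of_le_degree (hn.trans ((mem_pow_idealOfVars_iff n f).mp hf m hm))

theorem standardCoeffs_eq_zero_of_mem_span_X_pow {f : MvPolynomial (Fin 2 × Fin 2) R}
    (hf : f ∈ Ideal.span (Set.range fun v => X v ^ q)) : standardCoeffs R q f = 0 :=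
  standardCoeffs_eq_zero fun m hm =>
    have ⟨_, hv⟩ := (mem_span_X_pow_iff q f).mp hf m hm
    normalize_coords_notMem_of_le_apply hv

theorem standardCoeffs_eq_zero_of_mem_span_detX {f : MvPolynomial (Fin 2 × Fin 2) R}
    (hf : f ∈ Ideal.span {detX}) : standardCoeffs R q f = 0 := by
  obtain ⟨g, rfl⟩ := Ideal.mem_span_singleton'.mp hf
  rw [g.as_sum, sum_mul, map_sum]
  refine sum_eq_zero fun m _ => ?_
  rw [detX, ← pow_one (X (0, 0) * X (1, 1)), ← pow_one (X (0, 1) * X (1, 0)),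
    ← monomial_expOf_diag, ← monomial_expOf_antidiag, mul_sub, monomial_mul, monomial_mul,
    map_sub, standardCoeffs_monomial, standardCoeffs_monomial, sub_eq_zero]
  simp only [normalFormSingle, coords_add, coords_expOf, normalize_add_diag]

theorem monomial_sub_standardLift_mem (m : Fin 2 × Fin 2 →₀ ℕ) :
    monomial m 1 - standardLift R q (normalFormSingle R q m) ∈
      Ideal.span (Set.range fun v => X v ^ q) ⊔ Ideal.span {detX} := by
  have hnf := monomial_sub_monomial_normalize_mem (R := R) m
  by_cases h : normalize (coords m) ∈ standardExps q
  · rw [normalFormSingle, dif_pos h, standardLift, Fintype.linearCombination_apply_single, one_smul]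
    exact Ideal.mem_sup_right hnf
  · rw [normalFormSingle, dif_neg h, map_zero, sub_zero, ← sub_add_cancel (monomial m 1)]
    refine add_mem (Ideal.mem_sup_right hnf) (monomial_expOf_mem_of_notMem ?_ h)
    simp only [normalize]
    omega

theorem sub_standardLift_standardCoeffs_mem (f : MvPolynomial (Fin 2 × Fin 2) R) :
    f - standardLift R q (standardCoeffs R q f) ∈
      Ideal.span (Set.range fun v => X v ^ q) ⊔ Ideal.span {detX} := by
  induction f using MvPolynomial.induction_on' with
  | monomial m c =>
    rw [standardCoeffs_monomial, map_smul, ← mul_one c, ← smul_eq_mul, ← smul_monomial,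
      smul_eq_mul, mul_one, ← smul_sub]
    exact Submodule.smul_of_tower_mem _ c (monomial_sub_standardLift_mem m)
  | add f g hf hg =>
    rw [map_add, map_add, add_sub_add_comm]
    exact add_mem hf hg

theorem finrank_quotient_eq_card [Nontrivial R] {n : ℕ} (hn : 2 * q ≤ n) :
    finrank R (MvPolynomial (Fin 2 × Fin 2) R ⧸
      (idealOfVars _ R ^ n ⊔ Ideal.span (Set.range fun v => X v ^ q) ⊔ Ideal.span {detX})) =
      #(standardExps q) := by
  rw [finrank_quotient_eq_of_section (standardCoeffs R q) (standardLift R q)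
    standardCoeffs_standardLift ?_ ?_, finrank_pi, Fintype.card_coe]
  · intro f hf
    obtain ⟨g, hg, h, hh, rfl⟩ := Submodule.mem_sup.mp hf
    obtain ⟨g₁, hg₁, g₂, hg₂, rfl⟩ := Submodule.mem_sup.mp hg
    rw [map_add, map_add, standardCoeffs_eq_zero_of_mem_pow hn hg₁,
      standardCoeffs_eq_zero_of_mem_span_X_pow hg₂, standardCoeffs_eq_zero_of_mem_span_detX hh,
      add_zero, add_zero]
  · exact fun f => SetLike.le_def.mp (sup_le_sup_right le_sup_right _)
      (sub_standardLift_standardCoeffs_mem f)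

end DetHilbertKunz

open DetHilbertKunz in
theorem stmt16_general (k : Type*) [Field k] (p : ℕ) (e : ℕ)
    (s : ℝ) (hs : 2 ≤ s) (sq : ℕ) (hsq : (sq : ℝ) = s * (p : ℝ) ^ e) :
    (Module.finrank k
      (MvPolynomial (Fin 2 × Fin 2) k ⧸
        (Ideal.span (Set.range (MvPolynomial.X : Fin 2 × Fin 2 → MvPolynomial (Fin 2 × Fin 2) k)) ^ sq
          ⊔ Ideal.span (Set.range fun v : Fin 2 × Fin 2 =>
              (MvPolynomial.X v : MvPolynomial (Fin 2 × Fin 2) k) ^ p ^ e)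
          ⊔ Ideal.span {(MvPolynomial.X (0, 0) * MvPolynomial.X (1, 1) -
              MvPolynomial.X (0, 1) * MvPolynomial.X (1, 0) :
                MvPolynomial (Fin 2 × Fin 2) k)})) : ℝ)
    = 4 / 3 * ((p : ℝ) ^ e) ^ 3 - 1 / 3 * (p : ℝ) ^ e := by
  have hq : 2 * p ^ e ≤ sq := by
    have hq' : (2 * p ^ e : ℝ) ≤ sq := by
      rw [hsq]
      nlinarith [pow_nonneg (Nat.cast_nonneg p : (0 : ℝ) ≤ p) e]
    exact_mod_cast hq'
  have hdim := finrank_quotient_eq_card (R := k) hq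
  rw [detX] at hdim
  have hcard : (3 * #(standardExps (p ^ e)) + p ^ e : ℝ) = 4 * (p ^ e) ^ 3 := by
    exact_mod_cast card_standardExps (p ^ e)
  rw [hdim]
  linarith

/-- For `X` a `2×2` matrix of variables over a field `k` of characteristic `p`,
`q = pᵉ`, and `s ≥ 2` with `sq ∈ ℤ`, the `k`-dimension of
`k[X]/(𝔪^{sq} + 𝔪^{[q]} + I₂(X))` equals `(4/3)q³ − (1/3)q`. -/
theorem stmt16 (k : Type*) [Field k] (p : ℕ) (hp : p.Prime) [CharP k p] (e : ℕ)
    (s : ℝ) (hs : 2 ≤ s) (sq : ℕ) (hsq : (sq : ℝ) = s * (p : ℝ) ^ e) :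
    (Module.finrank k
      (MvPolynomial (Fin 2 × Fin 2) k ⧸
        (Ideal.span (Set.range (MvPolynomial.X : Fin 2 × Fin 2 → MvPolynomial (Fin 2 × Fin 2) k)) ^ sq
          ⊔ Ideal.span (Set.range fun v : Fin 2 × Fin 2 =>
              (MvPolynomial.X v : MvPolynomial (Fin 2 × Fin 2) k) ^ p ^ e)
          ⊔ Ideal.span {(MvPolynomial.X (0, 0) * MvPolynomial.X (1, 1) -
              MvPolynomial.X (0, 1) * MvPolynomial.X (1, 0) :
                MvPolynomial (Fin 2 × Fin 2) k)})) : ℝ)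
    = 4 / 3 * ((p : ℝ) ^ e) ^ 3 - 1 / 3 * (p : ℝ) ^ e :=
  stmt16_general k p e s hs sq hsq
end

section
/- Let R = F_2[x,y] with maximal ideal m = (x,y), p = 2, and s = 4/3. For e > 0, the length of R/(m^{⌈s·2^e⌉} + m^{[2^e]}) equals (7/9)·4^e + (5/9)·2^e − 2/9 if e is odd, and (7/9)·4^e + (7/9)·2^e − 5/9 if e is even. -/
/-!
Both ideals are monomial ideals, so the quotient has the standard monomials `x^a y^b` with
`a, b < q := 2^e` and `a + b < N := ⌈4q/3⌉` as a basis. The reflection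
`(a, b) ↦ (q - 1 - a, q - 1 - b)` maps the remaining monomials of the square `[0, q)²` onto a
triangle of side `T = 2q - 1 - N ≤ q`, so the length is `q² - T(T + 1)/2`. Finally
`3N = 4q + 1` or `3N = 4q + 2` according as `2^e ≡ 2` or `1 (mod 3)`, i.e. as `e` is odd or even.
-/

open Finset

namespace MvPolynomial

variable {σ R : Type*} [CommSemiring R]

lemma restrictSupport_sup (s t : Set (σ →₀ ℕ)) :
    restrictSupport R s ⊔ restrictSupport R t = restrictSupport R (s ∪ t) := by
  simp only [restrictSupport_eq_span, Set.image_union, Submodule.span_union]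

lemma isCompl_restrictSupport {s t : Set (σ →₀ ℕ)} (h : IsCompl s t) :
    IsCompl (restrictSupport R s) (restrictSupport R t) := by
  simp only [restrictSupport_eq_span]
  exact (basisMonomials σ R).linearIndependent.isCompl_span_image (basisMonomials σ R).span_eq h

lemma restrictScalars_span_monomial_image (G : Set (σ →₀ ℕ)) :
    (Ideal.span ((fun s => monomial s (1 : R)) '' G)).restrictScalars R =
      restrictSupport R (upperClosure G) := by
  ext p
  simp [mem_ideal_span_monomial_image, mem_restrictSupport_iff, Set.subset_def]

lemma restrictScalars_span_X_pow (q : ℕ) :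
    (Ideal.span (Set.range fun i : σ => (X i : MvPolynomial σ R) ^ q)).restrictScalars R =
      restrictSupport R {d | ∃ i, q ≤ d i} := by
  have hmonomial : Set.range (fun i : σ => (X i : MvPolynomial σ R) ^ q) =
      (fun s => monomial s (1 : R)) '' Set.range fun i => Finsupp.single i q := by
    rw [← Set.range_comp]
    simp [Function.comp_def, X_pow_eq_monomial]
  rw [hmonomial, restrictScalars_span_monomial_image]
  congr
  ext d
  simp [Finsupp.single_le_iff]

lemma restrictScalars_pow_idealOfVars (N : ℕ) :
    (idealOfVars σ R ^ N).restrictScalars R = restrictSupport R {d | N ≤ d.degree} := by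
  rw [pow_idealOfVars]
  rfl

lemma restrictScalars_pow_idealOfVars_sup_span_X_pow (N q : ℕ) :
    (idealOfVars σ R ^ N ⊔ Ideal.span (Set.range fun i => (X i : MvPolynomial σ R) ^ q)
      ).restrictScalars R = restrictSupport R {d | N ≤ d.degree ∨ ∃ i, q ≤ d i} := by
  rw [Submodule.restrictScalars_sup, restrictScalars_pow_idealOfVars, restrictScalars_span_X_pow,
    restrictSupport_sup]
  rfl

lemma finrank_quotient_eq_card {K : Type*} [Field K] {I : Ideal (MvPolynomial σ K)}
    {s : Set (σ →₀ ℕ)} (hI : I.restrictScalars K = restrictSupport K s) (t : Finset (σ →₀ ℕ))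
    (ht : (t : Set (σ →₀ ℕ)) = sᶜ) : Module.finrank K (MvPolynomial σ K ⧸ I) = #t := by
  calc Module.finrank K (MvPolynomial σ K ⧸ I)
      = Module.finrank K (MvPolynomial σ K ⧸ I.restrictScalars K) :=
        (Submodule.Quotient.restrictScalarsEquiv K I).symm.finrank_eq
    _ = Module.finrank K (restrictSupport K (t : Set (σ →₀ ℕ))) := by
        rw [hI]
        exact (Submodule.quotientEquivOfIsCompl _ _
          (isCompl_restrictSupport (ht ▸ isCompl_compl))).finrank_eq
    _ = #t := by
        rw [Module.finrank_eq_card_basis (basisRestrictSupport K (t : Set (σ →₀ ℕ)))]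
        simp

end MvPolynomial

def truncatedSquare (q N : ℕ) : Finset (ℕ × ℕ) :=
  (range q ×ˢ range q).filter fun p => p.1 + p.2 < N

lemma card_truncatedSquare_add_card_truncatedSquare (q N : ℕ) :
    #(truncatedSquare q N) + #(truncatedSquare q (2 * q - 1 - N)) = q * q := by
  have hsplit := card_filter_add_card_filter_not (s := range q ×ˢ range q) fun p => p.1 + p.2 < N
  rw [card_product, card_range] at hsplit
  rw [← hsplit, truncatedSquare]
  congr 1
  apply card_nbij' (fun p => (q - 1 - p.1, q - 1 - p.2)) (fun p => (q - 1 - p.1, q - 1 - p.2)) <;>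
    intro p <;> simp [truncatedSquare, Prod.ext_iff] <;> omega

lemma two_mul_card_truncatedSquare_of_le {q n : ℕ} (h : n ≤ q) :
    2 * #(truncatedSquare q n) = n * (n + 1) := by
  induction n with
  | zero => simp [truncatedSquare]
  | succ n ih =>
    have hsplit : truncatedSquare q (n + 1) = truncatedSquare q n ∪ antidiagonal n := by
      ext p
      simp [truncatedSquare]
      omega
    have hdisj : Disjoint (truncatedSquare q n) (antidiagonal n) := by
      rw [disjoint_left]
      intro p hp
      simp [truncatedSquare] at hp ⊢
      omega
    rw [hsplit, card_union_of_disjoint hdisj, Nat.card_antidiagonal, mul_add, ih (by omega)]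
    ring

lemma card_truncatedSquare {q N : ℕ} (h₁ : q ≤ N + 1) (h₂ : N < 2 * q) :
    (#(truncatedSquare q N) : ℚ) = q ^ 2 - (2 * q - 1 - N) * (2 * q - N) / 2 := by
  have hsum : (#(truncatedSquare q N) : ℚ) + #(truncatedSquare q (2 * q - 1 - N)) = q * q := by
    exact_mod_cast card_truncatedSquare_add_card_truncatedSquare q N
  have htri : 2 * (#(truncatedSquare q (2 * q - 1 - N)) : ℚ) =
      (2 * q - 1 - N : ℕ) * ((2 * q - 1 - N : ℕ) + 1) := by
    exact_mod_cast two_mul_card_truncatedSquare_of_le (q := q) (by omega)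
  rw [Nat.cast_sub (by omega), Nat.cast_sub (by omega)] at htri
  push_cast at htri
  linear_combination hsum - htri / 2

lemma MvPolynomial.finrank_quotient_pow_idealOfVars_sup_span_X_pow_fin_two
    (K : Type*) [Field K] (N q : ℕ) :
    Module.finrank K (MvPolynomial (Fin 2) K ⧸ (idealOfVars (Fin 2) K ^ N ⊔
      Ideal.span (Set.range fun i => (X i : MvPolynomial (Fin 2) K) ^ q))) =
      #(truncatedSquare q N) := by
  let e : (Fin 2 →₀ ℕ) ≃ ℕ × ℕ := Finsupp.equivFunOnFinite.trans (finTwoArrowEquiv ℕ)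
  rw [← card_map e.symm.toEmbedding]
  refine finrank_quotient_eq_card (restrictScalars_pow_idealOfVars_sup_span_X_pow N q) _ ?_
  ext d
  rw [coe_map, Equiv.coe_toEmbedding, Set.mem_image_equiv]
  simp [e, truncatedSquare, Finsupp.degree_eq_sum]
  omega

lemma ceil_four_thirds_mul (q : ℕ) : ⌈(4 : ℚ) / 3 * q⌉₊ = (4 * q + 2) / 3 := by
  rcases Nat.eq_zero_or_pos q with rfl | hq
  · simp
  rw [Nat.ceil_eq_iff (by omega)]
  have h₁ : ((3 * ((4 * q + 2) / 3) : ℕ) : ℚ) ≤ 4 * q + 2 := by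
    exact_mod_cast Nat.mul_div_le (4 * q + 2) 3
  have h₂ : (4 * q : ℚ) ≤ ((3 * ((4 * q + 2) / 3) : ℕ) : ℚ) := by
    exact_mod_cast (by omega : 4 * q ≤ 3 * ((4 * q + 2) / 3))
  rw [Nat.cast_sub (by omega)]
  push_cast at h₁ h₂ ⊢
  constructor <;> linarith

lemma two_pow_mod_three_of_even {e : ℕ} (he : Even e) : 2 ^ e % 3 = 1 := by
  obtain ⟨k, rfl⟩ := he
  rw [← two_mul, pow_mul, Nat.pow_mod]
  norm_num

lemma two_pow_mod_three_of_odd {e : ℕ} (he : Odd e) : 2 ^ e % 3 = 2 := by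
  obtain ⟨k, rfl⟩ := he
  rw [pow_succ, pow_mul, Nat.mul_mod, Nat.pow_mod]
  norm_num

/-- For `R = 𝔽₂[x,y]`, `𝔪 = (x,y)`, `s = 4/3`, and `e > 0`, the length of
`R/(𝔪^{⌈s·2ᵉ⌉} + 𝔪^{[2ᵉ]})` is `(7/9)4ᵉ + (5/9)2ᵉ − 2/9` for odd `e` and
`(7/9)4ᵉ + (7/9)2ᵉ − 5/9` for even `e`. -/
theorem stmt17 (e : ℕ) (he : 0 < e) :
    (Odd e →
      (Module.finrank (ZMod 2)
        (MvPolynomial (Fin 2) (ZMod 2) ⧸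
          (Ideal.span (Set.range (MvPolynomial.X : Fin 2 → MvPolynomial (Fin 2) (ZMod 2)))
              ^ ⌈(4 : ℚ) / 3 * 2 ^ e⌉₊
            ⊔ Ideal.span (Set.range fun i : Fin 2 =>
                (MvPolynomial.X i : MvPolynomial (Fin 2) (ZMod 2)) ^ 2 ^ e))) : ℚ)
        = 7 / 9 * 4 ^ e + 5 / 9 * 2 ^ e - 2 / 9) ∧
    (Even e →
      (Module.finrank (ZMod 2)
        (MvPolynomial (Fin 2) (ZMod 2) ⧸
          (Ideal.span (Set.range (MvPolynomial.X : Fin 2 → MvPolynomial (Fin 2) (ZMod 2)))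
              ^ ⌈(4 : ℚ) / 3 * 2 ^ e⌉₊
            ⊔ Ideal.span (Set.range fun i : Fin 2 =>
                (MvPolynomial.X i : MvPolynomial (Fin 2) (ZMod 2)) ^ 2 ^ e))) : ℚ)
        = 7 / 9 * 4 ^ e + 7 / 9 * 2 ^ e - 5 / 9) := by
  have hceil : ⌈(4 : ℚ) / 3 * 2 ^ e⌉₊ = (4 * 2 ^ e + 2) / 3 := by
    exact_mod_cast ceil_four_thirds_mul (2 ^ e)
  have hfour : (4 : ℚ) ^ e = (2 ^ e) ^ 2 := by
    rw [← pow_mul, mul_comm, pow_mul]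
    norm_num
  have hq : 2 ≤ 2 ^ e := Nat.le_self_pow he.ne' 2
  rw [hceil, ← MvPolynomial.idealOfVars,
    MvPolynomial.finrank_quotient_pow_idealOfVars_sup_span_X_pow_fin_two,
    card_truncatedSquare (by omega) (by omega), hfour]
  refine ⟨fun hodd => ?_, fun heven => ?_⟩
  · have hN : (((4 * 2 ^ e + 2) / 3 : ℕ) : ℚ) = (4 * 2 ^ e + 1) / 3 := by
      have := two_pow_mod_three_of_odd hodd
      rw [eq_div_iff three_ne_zero]
      exact_mod_cast (by omega : (4 * 2 ^ e + 2) / 3 * 3 = 4 * 2 ^ e + 1)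
    rw [hN]
    push_cast
    ring
  · have hN : (((4 * 2 ^ e + 2) / 3 : ℕ) : ℚ) = (4 * 2 ^ e + 2) / 3 := by
      have := two_pow_mod_three_of_even heven
      rw [eq_div_iff three_ne_zero]
      exact_mod_cast (by omega : (4 * 2 ^ e + 2) / 3 * 3 = 4 * 2 ^ e + 2)
    rw [hN]
    push_cast
    ring
end
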